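/- The number of logical qudits encoded by the GB code GB(a,b), namely k = 2ℓ - rank H_X - rank H_Z, equals 2·deg(gcd(a(x), b(x), x^ℓ - 1)). -/

import Mathlib

/-
Write `g = gcd(a, b, x^ℓ - 1)`. By Bézout, `g = a u + b v + (x^ℓ - 1) w`, and `P^ℓ = 1`, so
`g(P) = a(P) u(P) + b(P) v(P)`; conversely `a(P), b(P)` are multiples of `g(P)`. Hence
`(A | B)` has the column space of `g(P)`, and so does `(Bᵀ | -Aᵀ)` after transposing.
The map `p ↦ p(P) e₀` identifies polynomials of degree `< ℓ` with `F^ℓ` and turns `f(P)` into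
multiplication by `f`. Writing `x^ℓ - 1 = g c`, the independent vectors `x^j g`
(`j < ℓ - deg g`) lie in the image of `g(P)` and `x^j c` (`j < deg g`) in its kernel, so
rank–nullity gives `rank g(P) = ℓ - deg g`.
-/

open Polynomial Matrix
open scoped Classical

/-- The `ℓ × ℓ` cyclic permutation matrix `P` with `P eᵢ = e_{i+1 mod ℓ}`. -/
def cyclicP (F : Type*) [Semiring F] (n : ℕ) [NeZero n] : Matrix (Fin n) (Fin n) F :=
  Matrix.of fun i j => if i = j + 1 then 1 else 0

lemma Matrix.transpose_aeval {R m : Type*} [CommSemiring R] [Fintype m] [DecidableEq m]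
    (Q : Matrix m m R) (p : R[X]) : (aeval Q p)ᵀ = aeval Qᵀ p := by
  simp [aeval_eq_sum_range, transpose_sum, transpose_pow]

lemma LinearIndependent.card_le_finrank_of_forall_mem {K V ι : Type*} [DivisionRing K]
    [AddCommGroup V] [Module K V] [FiniteDimensional K V] [Fintype ι] {v : ι → V}
    (hv : LinearIndependent K v) {W : Submodule K V} (h : ∀ i, v i ∈ W) :
    Fintype.card ι ≤ Module.finrank K W :=
  (finrank_span_eq_card hv).symm.trans_le
    (Submodule.finrank_mono (Submodule.span_le.2 (Set.range_subset_iff.2 h)))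

lemma exists_add_mul_eq_gcd_gcd {R : Type*} [EuclideanDomain R] [DecidableEq R] (a b q : R) :
    ∃ u v w : R, a * u + b * v + q * w = EuclideanDomain.gcd (EuclideanDomain.gcd a b) q := by
  set d := EuclideanDomain.gcd a b with hd
  refine ⟨EuclideanDomain.gcdA a b * EuclideanDomain.gcdA d q,
    EuclideanDomain.gcdB a b * EuclideanDomain.gcdA d q, EuclideanDomain.gcdB d q, ?_⟩
  linear_combination -EuclideanDomain.gcd_eq_gcd_ab d q -
    EuclideanDomain.gcdA d q * (hd.trans (EuclideanDomain.gcd_eq_gcd_ab a b))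

lemma rank_fromCols_aeval_eq_rank_aeval {R m : Type*} [Field R] [Fintype m] [DecidableEq m]
    (Q : Matrix m m R) {a b g q : R[X]} (hq : aeval Q q = 0) (hga : g ∣ a) (hgb : g ∣ b)
    (hg : ∃ u v w : R[X], a * u + b * v + q * w = g) :
    (fromCols (aeval Q a) (aeval Q b)).rank = (aeval Q g).rank := by
  obtain ⟨a', rfl⟩ := hga
  obtain ⟨b', rfl⟩ := hgb
  obtain ⟨u, v, w, hg⟩ := hg
  apply le_antisymm
  · calc (fromCols (aeval Q (g * a')) (aeval Q (g * b'))).rank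
        = (aeval Q g * fromCols (aeval Q a') (aeval Q b')).rank := by
          simp only [map_mul, mul_fromCols]
      _ ≤ (aeval Q g).rank := rank_mul_le_left _ _
  · calc (aeval Q g).rank
        = (fromCols (aeval Q (g * a')) (aeval Q (g * b')) *
            fromRows (aeval Q u) (aeval Q v)).rank := by
          rw [fromCols_mul_fromRows, ← map_mul, ← map_mul, ← map_add]
          conv_lhs => rw [← hg, map_add (aeval Q) _ (q * w), map_mul, hq, zero_mul, add_zero]
      _ ≤ _ := rank_mul_le_left _ _

lemma Polynomial.natDegree_X_pow_sub_one {R : Type*} [Ring R] [Nontrivial R] (n : ℕ) :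
    (X ^ n - 1 : R[X]).natDegree = n := by
  simpa using natDegree_X_pow_sub_C (n := n) (r := (1 : R))

lemma Polynomial.X_pow_sub_one_ne_zero {R : Type*} [Ring R] [Nontrivial R] {n : ℕ}
    (hn : n ≠ 0) : (X ^ n - 1 : R[X]) ≠ 0 := by
  simpa using X_pow_sub_C_ne_zero (Nat.pos_of_ne_zero hn) (1 : R)

section cyclic

variable {F : Type*} {n : ℕ} [NeZero n]

open Fin.NatCast in
lemma cyclicP_pow [Semiring F] (k : ℕ) :
    cyclicP F n ^ k = Matrix.of fun i j => if i = j + (k : Fin n) then 1 else 0 := by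
  induction k with
  | zero => ext i j; simp [one_apply]
  | succ k ih =>
    ext i j
    rw [pow_succ, ih]
    simp only [mul_apply, of_apply, cyclicP, mul_ite, mul_one, mul_zero,
      Finset.sum_ite_eq', Finset.mem_univ, if_true, Nat.cast_succ, ← add_assoc]
    rw [add_right_comm]

lemma aeval_cyclicP_X_pow_sub_one [CommRing F] : aeval (cyclicP F n) (X ^ n - 1 : F[X]) = 0 := by
  have : cyclicP F n ^ n = 1 := by ext i j; simp [cyclicP_pow, one_apply]
  simp [this]

variable (F n) in
noncomputable def cyclicVec [CommSemiring F] : F[X] →ₗ[F] (Fin n → F) where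
  toFun p := aeval (cyclicP F n) p *ᵥ Pi.single 0 1
  map_add' p q := by rw [map_add, add_mulVec]
  map_smul' c p := by rw [map_smul, smul_mulVec, RingHom.id_apply]

lemma aeval_cyclicP_mulVec_cyclicVec [CommSemiring F] (f p : F[X]) :
    aeval (cyclicP F n) f *ᵥ cyclicVec F n p = cyclicVec F n (f * p) := by
  simp only [cyclicVec, LinearMap.coe_mk, AddHom.coe_mk, mulVec_mulVec, map_mul]

lemma cyclicVec_X_pow_sub_one [CommRing F] : cyclicVec F n (X ^ n - 1) = 0 := by
  change aeval (cyclicP F n) (X ^ n - 1) *ᵥ _ = 0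
  rw [aeval_cyclicP_X_pow_sub_one, zero_mulVec]

lemma cyclicVec_eq_degreeLTEquiv [CommSemiring F] {p : F[X]} (hp : p ∈ degreeLT F n) :
    cyclicVec F n p = degreeLTEquiv F n ⟨p, hp⟩ := by
  have hpn : p.natDegree < n := by
    rcases eq_or_ne p 0 with rfl | hp0
    · exact Nat.pos_of_neZero n
    · exact (natDegree_lt_iff_degree_lt hp0).2 (mem_degreeLT.1 hp)
  ext i
  simp only [cyclicVec, degreeLTEquiv, LinearMap.coe_mk, AddHom.coe_mk, LinearEquiv.coe_mk,
    aeval_eq_sum_range' hpn, cyclicP_pow, mulVec_single_one]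
  rw [← Fin.sum_univ_eq_sum_range]
  simp [Matrix.sum_apply]

lemma disjoint_degreeLT_ker_cyclicVec [CommSemiring F] :
    Disjoint (degreeLT F n) (LinearMap.ker (cyclicVec F n)) := by
  refine Submodule.disjoint_def.2 fun p hp hker => (degreeLTEquiv_eq_zero_iff_eq_zero hp).1 ?_
  rw [← cyclicVec_eq_degreeLTEquiv hp, ← LinearMap.mem_ker]
  exact hker

lemma linearIndependent_cyclicVec_X_pow_mul [Field F] {p : F[X]} (hp : p ≠ 0) {m : ℕ}
    (hm : m + p.natDegree ≤ n) :
    LinearIndependent F fun j : Fin m => cyclicVec F n (X ^ (j : ℕ) * p) := by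
  have hli : LinearIndependent F fun j : Fin m => (X ^ (j : ℕ) * p : F[X]) := by
    have := ((basisMonomials F).linearIndependent.comp _ (Fin.val_injective (n := m))).map'
      (LinearMap.mulRight F p) (LinearMap.ker_eq_bot.2 (mul_left_injective₀ hp))
    simpa [Function.comp_def, X_pow_eq_monomial] using this
  refine hli.map (f := cyclicVec F n) (disjoint_degreeLT_ker_cyclicVec.mono_left ?_)
  refine Submodule.span_le.2 (Set.range_subset_iff.2 fun j => ?_)
  rw [SetLike.mem_coe, mem_degreeLT, ← natDegree_lt_iff_degree_lt (by simp [hp]),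
    natDegree_X_pow_mul hp (n := j)]
  omega

lemma rank_aeval_cyclicP_of_dvd [Field F] {g : F[X]} (hg : g ∣ X ^ n - 1) :
    (aeval (cyclicP F n) g).rank = n - g.natDegree := by
  obtain ⟨c, hc⟩ := hg
  have hq : (X ^ n - 1 : F[X]) ≠ 0 := X_pow_sub_one_ne_zero (NeZero.ne n)
  have hg0 : g ≠ 0 := by rintro rfl; simp_all
  have hc0 : c ≠ 0 := by rintro rfl; simp_all
  have hdeg : g.natDegree + c.natDegree = n := by
    rw [← natDegree_mul hg0 hc0, ← hc, natDegree_X_pow_sub_one]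
  set M := aeval (cyclicP F n) g
  have hrange : n - g.natDegree ≤ Module.finrank F (LinearMap.range M.mulVecLin) := by
    simpa using (linearIndependent_cyclicVec_X_pow_mul hg0 (m := n - g.natDegree) (by omega))
      |>.card_le_finrank_of_forall_mem fun j =>
        LinearMap.mem_range.2 ⟨cyclicVec F n (X ^ (j : ℕ)), by
          rw [mulVecLin_apply, aeval_cyclicP_mulVec_cyclicVec, mul_comm]⟩
  have hker : g.natDegree ≤ Module.finrank F (LinearMap.ker M.mulVecLin) := by
    simpa using (linearIndependent_cyclicVec_X_pow_mul hc0 (m := g.natDegree) (by omega))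
      |>.card_le_finrank_of_forall_mem fun j => by
        rw [LinearMap.mem_ker, mulVecLin_apply, aeval_cyclicP_mulVec_cyclicVec,
          mul_left_comm, ← hc, ← aeval_cyclicP_mulVec_cyclicVec,
          cyclicVec_X_pow_sub_one, mulVec_zero]
  have := LinearMap.finrank_range_add_finrank_ker M.mulVecLin
  simp only [Module.finrank_fin_fun] at this
  change Module.finrank F (LinearMap.range M.mulVecLin) = _
  omega

end cyclic

theorem stmt_5_general (F : Type*) [Field F] (ℓ : ℕ) [NeZero ℓ] (a b : Polynomial F) :
    2 * ℓ -
        (Matrix.fromCols (Polynomial.aeval (cyclicP F ℓ) a)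
          (Polynomial.aeval (cyclicP F ℓ) b)).rank -
        (Matrix.fromCols ((Polynomial.aeval (cyclicP F ℓ) b)ᵀ)
          (-(Polynomial.aeval (cyclicP F ℓ) a)ᵀ)).rank =
      2 * (EuclideanDomain.gcd (EuclideanDomain.gcd a b)
        ((X : Polynomial F) ^ ℓ - 1)).natDegree := by
  obtain ⟨u, v, w, huvw⟩ := exists_add_mul_eq_gcd_gcd a b ((X : F[X]) ^ ℓ - 1)
  set P := cyclicP F ℓ
  set g := EuclideanDomain.gcd (EuclideanDomain.gcd a b) ((X : F[X]) ^ ℓ - 1)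
  have hq : aeval P (X ^ ℓ - 1 : F[X]) = 0 := aeval_cyclicP_X_pow_sub_one
  have hqT : aeval Pᵀ (X ^ ℓ - 1 : F[X]) = 0 := by rw [← transpose_aeval, hq, transpose_zero]
  have hgab : g ∣ EuclideanDomain.gcd a b := EuclideanDomain.gcd_dvd_left _ _
  have hga : g ∣ a := hgab.trans (EuclideanDomain.gcd_dvd_left a b)
  have hgb : g ∣ b := hgab.trans (EuclideanDomain.gcd_dvd_right a b)
  have hgq : g ∣ X ^ ℓ - 1 := EuclideanDomain.gcd_dvd_right _ _
  have hX : (fromCols (aeval P a) (aeval P b)).rank = ℓ - g.natDegree := by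
    rw [rank_fromCols_aeval_eq_rank_aeval P hq hga hgb ⟨u, v, w, huvw⟩,
      rank_aeval_cyclicP_of_dvd hgq]
  have hZ : (fromCols (aeval P b)ᵀ (-(aeval P a)ᵀ)).rank = ℓ - g.natDegree := by
    rw [transpose_aeval, transpose_aeval, ← map_neg,
      rank_fromCols_aeval_eq_rank_aeval Pᵀ hqT hgb hga.neg_right
        ⟨v, -u, w, by rw [← huvw]; ring⟩,
      ← transpose_aeval, rank_transpose, rank_aeval_cyclicP_of_dvd hgq]
  have hgℓ : g.natDegree ≤ ℓ := by
    simpa [natDegree_X_pow_sub_one] using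
      natDegree_le_of_dvd hgq (X_pow_sub_one_ne_zero (NeZero.ne ℓ))
  omega

/-- The number of logical qudits of `GB(a,b)`, `k = 2ℓ - rank H_X - rank H_Z`,
equals `2 · deg gcd(a, b, x^ℓ - 1)`. -/
theorem stmt_5 (F : Type*) [Field F] [Fintype F] (ℓ : ℕ) [NeZero ℓ] (a b : Polynomial F)
    (ha : a.natDegree < ℓ) (hb : b.natDegree < ℓ) :
    2 * ℓ -
        (Matrix.fromCols (Polynomial.aeval (cyclicP F ℓ) a)
          (Polynomial.aeval (cyclicP F ℓ) b)).rank -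
        (Matrix.fromCols ((Polynomial.aeval (cyclicP F ℓ) b)ᵀ)
          (-(Polynomial.aeval (cyclicP F ℓ) a)ᵀ)).rank =
      2 * (EuclideanDomain.gcd (EuclideanDomain.gcd a b)
        ((X : Polynomial F) ^ ℓ - 1)).natDegree :=
  stmt_5_general F ℓ a b
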